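/- arXiv:1211.4129 — 2 statements merged into one kernel-verified Lean document; each statement's English description precedes it below -/
import Mathlib

section
/- Let $a, c > 0$, $b \geq 0$, $\lambda \in \mathbb{R}$, and set $\Delta = (b-\lambda)^2 - 4ac$. Suppose $\Delta = 0$ and define $x_k = \eta\, k\, (\sqrt{ac}/a)^k$ for $k \geq 1$ with $\eta > 0$. If $\lambda = b + 2\sqrt{ac}$, then $\boldsymbol x$ satisfies $b x_1 + a x_2 = \lambda x_1$ and $a x_{k+1} + (b-\lambda) x_k + c x_{k-1} = 0$ for all $k \geq 2$; moreover $\sum_{k\geq 1} x_k < \infty$ if and only if $a > c$. -/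
/-!
With `s = √(ac)`, `r = s / a` and `p = b - λ = -2s`, the number `r` is a double root of the
characteristic polynomial `a t² + p t + c` (because `s² = ac`). For a double root, `k ↦ k rᵏ`
solves the three-term recurrence, and since this sequence vanishes at `k = 0` the boundary
equation is the recurrence at `k = 1`. The series `∑ k rᵏ` converges exactly when `r < 1`,
i.e. when `ac < a²`.
-/

theorem mul_pow_recurrence_of_double_root {R : Type*} [CommRing R] {a p c r : R}
    (hroot : a * r ^ 2 + p * r + c = 0) (hderiv : 2 * a * r + p = 0) (k : ℕ) :
    a * (((k : R) + 2) * r ^ (k + 2)) + p * (((k : R) + 1) * r ^ (k + 1)) + c * (k * r ^ k) = 0 := by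
  linear_combination ((k : R) * r ^ k) * hroot + r ^ (k + 1) * hderiv

theorem summable_natCast_mul_pow_iff {r : ℝ} :
    Summable (fun n : ℕ => (n : ℝ) * r ^ n) ↔ |r| < 1 := by
  refine ⟨fun h => ?_, fun h => by
    simpa using summable_pow_mul_geometric_of_norm_lt_one (R := ℝ) 1 (Real.norm_eq_abs r ▸ h)⟩
  have hshift : Summable (fun n : ℕ => r ^ (n + 1)) := by
    refine Summable.of_norm_bounded ((summable_nat_add_iff 1).2 h).norm fun n => ?_
    rw [norm_mul, Nat.cast_add_one, Real.norm_of_nonneg (by positivity : (0 : ℝ) ≤ n + 1)]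
    exact le_mul_of_one_le_left (norm_nonneg _) (by linarith [n.cast_nonneg (α := ℝ)])
  rw [← Real.norm_eq_abs, ← summable_geometric_iff_norm_lt_one]
  exact (summable_nat_add_iff 1).1 hshift

theorem sqrt_mul_div_lt_one_iff {a c : ℝ} (ha : 0 < a) : √(a * c) / a < 1 ↔ c < a := by
  rw [div_lt_one ha, Real.sqrt_lt' ha, sq, mul_lt_mul_iff_right₀ ha]

theorem tridiagonal_eigenvector_delta_zero_general
    (a b c lam η : ℝ) (ha : 0 < a) (hc : 0 < c) (hη : 0 < η)
    (hlam : lam = b + 2 * Real.sqrt (a * c))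
    (x : ℕ → ℝ) (hx : ∀ k : ℕ, x k = η * k * (Real.sqrt (a * c) / a) ^ k) :
    b * x 1 + a * x 2 = lam * x 1 ∧
    (∀ k : ℕ, 2 ≤ k → a * x (k + 1) + (b - lam) * x k + c * x (k - 1) = 0) ∧
    (Summable x ↔ c < a) := by
  obtain ⟨r, hr⟩ : ∃ r, r = √(a * c) / a := ⟨_, rfl⟩
  simp only [← hr] at hx
  have hs2 : √(a * c) ^ 2 = a * c := Real.sq_sqrt (mul_pos ha hc).le
  have hroot : a * r ^ 2 + (b - lam) * r + c = 0 := by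
    rw [hr, hlam]; field_simp; linear_combination -hs2
  have hderiv : 2 * a * r + (b - lam) = 0 := by
    rw [hr, hlam]; field_simp; ring
  have hrec := mul_pow_recurrence_of_double_root hroot hderiv
  refine ⟨?_, fun k hk => ?_, ?_⟩
  · simp only [hx]
    linear_combination η * hrec 0
  · obtain ⟨m, rfl⟩ : ∃ m, k = m + 2 := ⟨k - 2, by omega⟩
    simp only [hx, show m + 2 - 1 = m + 1 from rfl]
    have hrec' := hrec (m + 1)
    push_cast at hrec' ⊢
    linear_combination η * hrec'
  · have hxr : x = fun k : ℕ => η * ((k : ℝ) * r ^ k) := funext fun k => by rw [hx k]; ring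
    rw [hxr, summable_mul_left_iff hη.ne', summable_natCast_mul_pow_iff, hr,
      abs_of_nonneg (by positivity), sqrt_mul_div_lt_one_iff ha]

/-- Case `Δ = 0` for the tridiagonal matrix: with `λ = b + 2√(ac)` and
`x_k = η k (√(ac)/a)^k`, the vector `x` satisfies the left-eigenvector equations
`b x₁ + a x₂ = λ x₁` and `a x_{k+1} + (b-λ) x_k + c x_{k-1} = 0` for `k ≥ 2`, and
`∑_{k≥1} x_k < ∞` iff `a > c`. -/
theorem tridiagonal_eigenvector_delta_zero
    (a b c lam η : ℝ) (ha : 0 < a) (hc : 0 < c) (hb : 0 ≤ b) (hη : 0 < η)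
    (hΔ : (b - lam) ^ 2 - 4 * a * c = 0)
    (hlam : lam = b + 2 * Real.sqrt (a * c))
    (x : ℕ → ℝ) (hx : ∀ k : ℕ, x k = η * k * (Real.sqrt (a * c) / a) ^ k) :
    b * x 1 + a * x 2 = lam * x 1 ∧
    (∀ k : ℕ, 2 ≤ k → a * x (k + 1) + (b - lam) * x k + c * x (k - 1) = 0) ∧
    (Summable x ↔ c < a) :=
  tridiagonal_eigenvector_delta_zero_general a b c lam η ha hc hη hlam x hx
end

section
/- Let $M$ be the infinite tridiagonal matrix with sub-diagonal $a$, diagonal $b$, super-diagonal $c$ ($a, c > 0$, $b \geq 0$), and first row $(b, c, 0, \ldots)$. For every $\lambda \geq b + 2\sqrt{ac}$ there exists a strictly positive vector $\boldsymbol x$ with $\boldsymbol x M = \lambda \boldsymbol x$; and no strictly positive left-eigenvector exists for $\lambda < b + 2\sqrt{ac}$ with $\lambda > b - 2\sqrt{ac}$. Hence the convergence norm of $M$ equals $b + 2\sqrt{ac}$ (as the minimal $\lambda$ admitting a nonnegative $\boldsymbol x$ with $\boldsymbol x M \leq \lambda \boldsymbol x$, within the range $\lambda > b - 2\sqrt{ac}$).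 -/
/-!
With `μ = λ - b`, the equations `x M = λ x` are the three-term recurrence
`a x₁ = μ x₀`, `c xⱼ + a xⱼ₊₂ = μ xⱼ₊₁`. For `μ ≥ 2√(ac)` the polynomial `a t² - μ t + c` has
positive roots `p, q`, and `xⱼ = ∑ᵢ pⁱ qʲ⁻ⁱ` is a positive solution. For `|μ| < 2√(ac)` the
solution `ρʲ sin ((j + 1) φ)`, with `ρ = √(c / a)` and `cos φ = μ / 2√(ac)`, changes sign, and
a Sturm comparison of Wronskians shows that then no positive `x` satisfies even `x M ≤ λ x`.
A nonnegative nonzero `x` with `x M ≤ λ x` is automatically positive, because a zero entry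
forces its neighbours to vanish.
-/

open Finset Real

namespace Tridiagonal

def matrix (a b c : ℝ) (i j : ℕ) : ℝ :=
  if j + 1 = i then a else if j = i then b else if j = i + 1 then c else 0

structure IsSolution (a c μ : ℝ) (x : ℕ → ℝ) : Prop where
  zero : a * x 1 = μ * x 0
  succ (j : ℕ) : c * x j + a * x (j + 2) = μ * x (j + 1)

structure IsSubsolution (a c μ : ℝ) (x : ℕ → ℝ) : Prop where
  zero : a * x 1 ≤ μ * x 0
  succ (j : ℕ) : c * x j + a * x (j + 2) ≤ μ * x (j + 1)

theorem IsSolution.isSubsolution {a c μ : ℝ} {x : ℕ → ℝ} (h : IsSolution a c μ x) :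
    IsSubsolution a c μ x :=
  ⟨h.zero.le, fun j => (h.succ j).le⟩

section Matrix

variable (a b c : ℝ) (x : ℕ → ℝ)

theorem tsum_mul_matrix_zero : ∑' i, x i * matrix a b c i 0 = x 0 * b + x 1 * a := by
  rw [tsum_eq_sum (s := {0, 1}) fun i hi => by
    simp only [mem_insert, mem_singleton, not_or] at hi
    rw [matrix, if_neg (by omega), if_neg (by omega), if_neg (by omega), mul_zero]]
  simp [matrix]

theorem tsum_mul_matrix_succ (j : ℕ) :
    ∑' i, x i * matrix a b c i (j + 1) = x j * c + x (j + 1) * b + x (j + 2) * a := by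
  rw [tsum_eq_sum (s := {j, j + 1, j + 2}) fun i hi => by
    simp only [mem_insert, mem_singleton, not_or] at hi
    rw [matrix, if_neg (by omega), if_neg (by omega), if_neg (by omega), mul_zero]]
  rw [sum_insert (by simp), sum_insert (by simp), sum_singleton]
  simp [matrix, add_assoc]

theorem tsum_mul_matrix_eq_iff (lam : ℝ) :
    (∀ j, ∑' i, x i * matrix a b c i j = lam * x j) ↔ IsSolution a c (lam - b) x := by
  rw [← Nat.and_forall_add_one]
  simp only [tsum_mul_matrix_zero, tsum_mul_matrix_succ]
  refine ⟨fun ⟨h0, h⟩ => ⟨by linarith, fun j => by linarith [h j]⟩,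
    fun h => ⟨by linarith [h.zero], fun j => by linarith [h.succ j]⟩⟩

theorem tsum_mul_matrix_le_iff (lam : ℝ) :
    (∀ j, ∑' i, x i * matrix a b c i j ≤ lam * x j) ↔ IsSubsolution a c (lam - b) x := by
  rw [← Nat.and_forall_add_one]
  simp only [tsum_mul_matrix_zero, tsum_mul_matrix_succ]
  refine ⟨fun ⟨h0, h⟩ => ⟨by linarith, fun j => by linarith [h j]⟩,
    fun h => ⟨by linarith [h.zero], fun j => by linarith [h.succ j]⟩⟩

end Matrix

section Existence

variable {a c μ : ℝ}

theorem isSolution_geom_sum₂ {p q : ℝ} (hsum : a * (p + q) = μ) (hprod : a * (p * q) = c) :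
    IsSolution a c μ fun j => ∑ i ∈ range (j + 1), p ^ i * q ^ (j - i) := by
  set S : ℕ → ℝ := fun n => ∑ i ∈ range n, p ^ i * q ^ (n - 1 - i) with hS
  have hstep (n : ℕ) : S (n + 1) = p ^ n + q * S n := by
    simpa [hS] using geom_sum₂_succ_eq p q (n := n)
  have hx : (fun j => ∑ i ∈ range (j + 1), p ^ i * q ^ (j - i)) = fun j => S (j + 1) := by
    simp [hS]
  have hS1 : S 1 = 1 := by simp [hS]
  rw [hx]
  constructor
  · simp only [hstep 1, hS1]
    linear_combination hsum
  · intro j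
    linear_combination
      a * hstep (j + 2) - a * p * hstep (j + 1) + S (j + 2) * hsum - S (j + 1) * hprod

theorem exists_pos_sum_prod (ha : 0 < a) (hc : 0 < c) (hμ : 2 * √(a * c) ≤ μ) :
    ∃ p q : ℝ, 0 < p ∧ 0 < q ∧ a * (p + q) = μ ∧ a * (p * q) = c := by
  have hac : 0 < a * c := mul_pos ha hc
  have hs := sq_sqrt hac.le
  have hs0 := sqrt_pos.2 hac
  have hdisc : 0 ≤ μ ^ 2 - 4 * (a * c) := by nlinarith
  set t := √(μ ^ 2 - 4 * (a * c))
  have ht : t ^ 2 = μ ^ 2 - 4 * (a * c) := sq_sqrt hdisc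
  have ht0 : 0 ≤ t := sqrt_nonneg _
  have htμ : t < μ := by nlinarith
  refine ⟨(μ + t) / (2 * a), (μ - t) / (2 * a), div_pos (by linarith) (by positivity),
    div_pos (by linarith) (by positivity), ?_, ?_⟩
  · field_simp
    ring
  · field_simp
    linear_combination -ht

theorem exists_pos_isSolution (ha : 0 < a) (hc : 0 < c) (hμ : 2 * √(a * c) ≤ μ) :
    ∃ x : ℕ → ℝ, (∀ k, 0 < x k) ∧ IsSolution a c μ x := by
  obtain ⟨p, q, hp, hq, hsum, hprod⟩ := exists_pos_sum_prod ha hc hμ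
  exact ⟨_, fun k => sum_pos (fun i _ => by positivity) nonempty_range_add_one,
    isSolution_geom_sum₂ hsum hprod⟩

end Existence

section Oscillation

variable {a c μ : ℝ}

theorem isSolution_sin {ρ φ : ℝ} (hρ : a * ρ ^ 2 = c) (hφ : 2 * a * ρ * cos φ = μ) :
    IsSolution a c μ fun j => ρ ^ j * sin ((j + 1) * φ) := by
  constructor
  · simp only [Nat.cast_one, Nat.cast_zero, pow_one, pow_zero, zero_add, one_mul]
    rw [one_add_one_eq_two, sin_two_mul, ← hφ]
    ring
  · intro j
    have hsin : sin ((j + 1) * φ) + sin ((j + 2 + 1) * φ) =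
        2 * cos φ * sin ((j + 1 + 1) * φ) := by
      rw [show ((j : ℝ) + 1) * φ = (j + 1 + 1) * φ - φ by ring,
        show ((j : ℝ) + 2 + 1) * φ = (j + 1 + 1) * φ + φ by ring, sin_sub, sin_add]
      ring
    push_cast
    rw [← hρ, ← hφ]
    linear_combination a * ρ ^ (j + 2) * hsin

theorem exists_sin_nonpos {φ : ℝ} (h0 : 0 < φ) (hπ : φ < π) :
    ∃ n : ℕ, sin ((n + 1) * φ) ≤ 0 := by
  set N := ⌈π / φ⌉₊
  have hN : 0 < N := Nat.ceil_pos.2 (by positivity)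
  have hle : π ≤ N * φ := (div_le_iff₀ h0).1 (Nat.le_ceil _)
  have hlt : N * φ < π + φ := by
    have := Nat.ceil_lt_add_one (div_nonneg pi_pos.le h0.le)
    rw [← lt_div_iff₀ h0, add_div, div_self h0.ne']
    exact this
  refine ⟨N - 1, ?_⟩
  rw [show ((N - 1 : ℕ) : ℝ) + 1 = N by rw [Nat.cast_sub hN, Nat.cast_one]; ring,
    ← sin_sub_two_pi]
  exact sin_nonpos_of_nonpos_of_neg_pi_le (by linarith) (by linarith)

theorem exists_isSolution_sign_change (ha : 0 < a) (hc : 0 < c) (h₁ : -(2 * √(a * c)) < μ)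
    (h₂ : μ < 2 * √(a * c)) :
    ∃ w : ℕ → ℝ, IsSolution a c μ w ∧ 0 < w 0 ∧ ∃ n, w n ≤ 0 := by
  have hac : 0 < a * c := mul_pos ha hc
  have hs := sq_sqrt hac.le
  have hs0 := sqrt_pos.2 hac
  set φ := arccos (μ / (2 * √(a * c)))
  have hcos : cos φ = μ / (2 * √(a * c)) :=
    cos_arccos (by rw [le_div_iff₀ (by positivity)]; linarith)
      (by rw [div_le_iff₀ (by positivity)]; linarith)
  have hφ0 : 0 < φ := arccos_pos.2 (by rw [div_lt_iff₀ (by positivity)]; linarith)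
  have hφπ : φ < π := arccos_lt_pi.2 (by rw [lt_div_iff₀ (by positivity)]; linarith)
  obtain ⟨n, hn⟩ := exists_sin_nonpos hφ0 hφπ
  set ρ := √(a * c) / a
  refine ⟨_, isSolution_sin (ρ := ρ) (φ := φ) ?_ ?_, ?_, n, ?_⟩
  · simp only [ρ, div_pow, hs]
    field_simp
  · simp only [ρ, hcos]
    field_simp
  · simpa using sin_pos_of_pos_of_lt_pi hφ0 hφπ
  · exact mul_nonpos_of_nonneg_of_nonpos (by positivity) hn

theorem exists_first_nonpos {w : ℕ → ℝ} (h0 : 0 < w 0) (h : ∃ n, w n ≤ 0) :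
    ∃ m, (∀ j ≤ m, 0 < w j) ∧ w (m + 1) ≤ 0 := by
  have hfind : Nat.find h ≠ 0 := fun h' => (Nat.find_spec h).not_gt (h' ▸ h0)
  refine ⟨Nat.find h - 1, fun j hj => not_le.1 (Nat.find_min h (by omega)), ?_⟩
  rw [Nat.sub_add_cancel (Nat.one_le_iff_ne_zero.2 hfind)]
  exact Nat.find_spec h

end Oscillation

section Comparison

variable {a c μ : ℝ} {x w : ℕ → ℝ}

theorem wronskian_nonpos (ha : 0 < a) (hc : 0 ≤ c) (hx : IsSubsolution a c μ x)
    (hw : IsSolution a c μ w) (m : ℕ) (hpos : ∀ j ≤ m, 0 ≤ w j) :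
    x (m + 1) * w m - x m * w (m + 1) ≤ 0 := by
  induction m with
  | zero =>
    have key : a * (x 1 * w 0 - x 0 * w 1) ≤ a * 0 := by
      linarith [mul_le_mul_of_nonneg_right hx.zero (hpos 0 le_rfl), congrArg (x 0 * ·) hw.zero]
    exact le_of_mul_le_mul_left key ha
  | succ m ih =>
    have key : a * (x (m + 2) * w (m + 1) - x (m + 1) * w (m + 2)) ≤
        c * (x (m + 1) * w m - x m * w (m + 1)) := by
      linarith [mul_le_mul_of_nonneg_right (hx.succ m) (hpos (m + 1) le_rfl),
        congrArg (· * x (m + 1)) (hw.succ m)]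
    have := mul_nonpos_of_nonneg_of_nonpos hc (ih fun j hj => hpos j (by omega))
    exact le_of_mul_le_mul_left (by linarith) ha

theorem IsSubsolution.not_forall_pos_of_sign_change (ha : 0 < a) (hc : 0 ≤ c)
    (hx : IsSubsolution a c μ x) (hw : IsSolution a c μ w) (hw0 : 0 < w 0)
    (hwn : ∃ n, w n ≤ 0) : ¬ ∀ k, 0 < x k := by
  intro hxpos
  obtain ⟨m, hpos, hm⟩ := exists_first_nonpos hw0 hwn
  have := wronskian_nonpos ha hc hx hw m fun j hj => (hpos j hj).le
  nlinarith [mul_pos (hxpos (m + 1)) (hpos m le_rfl),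
    mul_nonpos_of_nonneg_of_nonpos (hxpos m).le hm]

theorem two_sqrt_le_of_pos_isSubsolution (ha : 0 < a) (hc : 0 < c) (hxpos : ∀ k, 0 < x k)
    (hx : IsSubsolution a c μ x) : 2 * √(a * c) ≤ μ := by
  by_contra! hμ
  have hμ0 : 0 < μ := by
    nlinarith [hx.zero, mul_pos ha (hxpos 1), hxpos 0]
  obtain ⟨w, hw, hw0, hwn⟩ :=
    exists_isSolution_sign_change ha hc (by linarith [sqrt_nonneg (a * c)]) hμ
  exact hx.not_forall_pos_of_sign_change ha hc.le hw hw0 hwn hxpos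

theorem IsSubsolution.pos_of_nonneg (ha : 0 < a) (hc : 0 < c) (hx : IsSubsolution a c μ x)
    (hnn : ∀ i, 0 ≤ x i) (hne : x ≠ 0) (k : ℕ) : 0 < x k := by
  have hsucc (j : ℕ) (h : x (j + 1) = 0) : x j = 0 ∧ x (j + 2) = 0 := by
    have hcx := mul_nonneg hc.le (hnn j)
    have hax := mul_nonneg ha.le (hnn (j + 2))
    obtain ⟨h₁, h₂⟩ := (add_eq_zero_iff_of_nonneg hcx hax).1
      (le_antisymm (by simpa [h] using hx.succ j) (add_nonneg hcx hax))
    exact ⟨(mul_eq_zero.1 h₁).resolve_left hc.ne', (mul_eq_zero.1 h₂).resolve_left ha.ne'⟩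
  have hone (h : x 0 = 0) : x 1 = 0 :=
    le_antisymm (nonpos_of_mul_nonpos_right (by simpa [h] using hx.zero) ha) (hnn 1)
  have hstep (j : ℕ) : x (j + 1) = 0 ↔ x j = 0 := by
    refine ⟨fun h => (hsucc j h).1, fun h => ?_⟩
    cases j with
    | zero => exact hone h
    | succ i => exact (hsucc i h).2
  have hzero (j : ℕ) : x j = 0 ↔ x 0 = 0 := by
    induction j with
    | zero => rfl
    | succ j ih => exact (hstep j).trans ih
  refine (hnn k).lt_of_ne fun hk => hne (funext fun j => ?_)
  exact (hzero j).2 ((hzero k).1 hk.symm)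

end Comparison

end Tridiagonal

theorem tridiagonal_convergence_norm_general
    (a b c : ℝ) (ha : 0 < a) (hc : 0 < c)
    (M : ℕ → ℕ → ℝ)
    (hM : ∀ i j, M i j =
      if j + 1 = i then a else if j = i then b else if j = i + 1 then c else 0) :
    (∀ lam : ℝ, b + 2 * Real.sqrt (a * c) ≤ lam →
      ∃ x : ℕ → ℝ, (∀ k, 0 < x k) ∧ ∀ j, (∑' i, x i * M i j) = lam * x j) ∧
    (∀ lam : ℝ, b - 2 * Real.sqrt (a * c) < lam → lam < b + 2 * Real.sqrt (a * c) →
      ¬ ∃ x : ℕ → ℝ, (∀ k, 0 < x k) ∧ ∀ j, (∑' i, x i * M i j) = lam * x j) ∧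
    IsLeast {lam : ℝ | b - 2 * Real.sqrt (a * c) < lam ∧
        ∃ x : ℕ → ℝ, (∀ i, 0 ≤ x i) ∧ x ≠ 0 ∧ ∀ j, (∑' i, x i * M i j) ≤ lam * x j}
      (b + 2 * Real.sqrt (a * c)) := by
  open Tridiagonal in
  obtain rfl : M = matrix a b c := funext₂ hM
  simp only [tsum_mul_matrix_eq_iff, tsum_mul_matrix_le_iff]
  refine ⟨fun lam hlam => exists_pos_isSolution ha hc (by linarith), ?_, ?_, ?_⟩
  · rintro lam - hlam ⟨x, hxpos, hx⟩
    linarith [two_sqrt_le_of_pos_isSubsolution ha hc hxpos hx.isSubsolution]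
  · obtain ⟨x, hxpos, hx⟩ := exists_pos_isSolution (μ := 2 * √(a * c)) ha hc le_rfl
    refine ⟨by linarith [sqrt_pos.2 (mul_pos ha hc)], x, fun i => (hxpos i).le,
      fun h => (hxpos 0).ne' (congrFun h 0), by simpa using hx.isSubsolution⟩
  · rintro lam ⟨-, x, hnn, hne, hx⟩
    linarith [two_sqrt_le_of_pos_isSubsolution ha hc (hx.pos_of_nonneg ha hc hnn hne) hx]

/-- For the infinite tridiagonal matrix `M` with sub-diagonal `a`, diagonal `b`,
super-diagonal `c` and first row `(b, c, 0, …)`: every `λ ≥ b + 2√(ac)` admits a strictly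
positive left eigenvector; no strictly positive left eigenvector exists for
`b - 2√(ac) < λ < b + 2√(ac)`; and `b + 2√(ac)` is the convergence norm, i.e. the smallest
`λ` (in the range `λ > b - 2√(ac)`) admitting a nonnegative nonzero `x` with `x M ≤ λ x`. -/
theorem tridiagonal_convergence_norm
    (a b c : ℝ) (ha : 0 < a) (hc : 0 < c) (hb : 0 ≤ b)
    (M : ℕ → ℕ → ℝ)
    (hM : ∀ i j, M i j =
      if j + 1 = i then a else if j = i then b else if j = i + 1 then c else 0) :
    (∀ lam : ℝ, b + 2 * Real.sqrt (a * c) ≤ lam →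
      ∃ x : ℕ → ℝ, (∀ k, 0 < x k) ∧ ∀ j, (∑' i, x i * M i j) = lam * x j) ∧
    (∀ lam : ℝ, b - 2 * Real.sqrt (a * c) < lam → lam < b + 2 * Real.sqrt (a * c) →
      ¬ ∃ x : ℕ → ℝ, (∀ k, 0 < x k) ∧ ∀ j, (∑' i, x i * M i j) = lam * x j) ∧
    IsLeast {lam : ℝ | b - 2 * Real.sqrt (a * c) < lam ∧
        ∃ x : ℕ → ℝ, (∀ i, 0 ≤ x i) ∧ x ≠ 0 ∧ ∀ j, (∑' i, x i * M i j) ≤ lam * x j}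
      (b + 2 * Real.sqrt (a * c)) :=
  tridiagonal_convergence_norm_general a b c ha hc M hM
end
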